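/- arXiv:1312.2770 — 2 statements merged into one kernel-verified Lean document; each statement's English description precedes it below -/
import Mathlib

section
/- Let E be a Banach lattice. Every order interval [-x, x] (for x in the positive cone of E) is a limited subset of E if and only if the lattice operations of E* are weak* sequentially continuous, i.e., whenever a sequence (f_n) in E* is weak* null, the sequence (|f_n|) is weak* null. -/
open Filter Topology Metric Pointwise

/-- The value `|f| x` of the modulus of a continuous linear functional at a positive
element `x`, given by the Riesz–Kantorovich formula `|f| x = sup { f u : |u| ≤ x }`. -/
noncomputable def absFunctional {E : Type*} [NormedAddCommGroup E] [Lattice E] [HasSolidNorm E]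
    [IsOrderedAddMonoid E] [NormedSpace ℝ E]
    (f : E →L[ℝ] ℝ) (x : E) : ℝ :=
  sSup ((fun u => f u) '' {u : E | |u| ≤ x})

/-- Two functionals `f, g` on a Banach lattice are (lattice) disjoint: `|f| ⊓ |g| = 0`,
expressed via the Riesz–Kantorovich formula for the infimum of the positive functionals
`|f|` and `|g|`. -/
def DualDisjoint {E : Type*} [NormedAddCommGroup E] [Lattice E] [HasSolidNorm E]
    [IsOrderedAddMonoid E] [NormedSpace ℝ E]
    (f g : E →L[ℝ] ℝ) : Prop :=
  ∀ x : E, 0 ≤ x → ∀ ε : ℝ, 0 < ε →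
    ∃ y : E, 0 ≤ y ∧ y ≤ x ∧ absFunctional f y + absFunctional g (x - y) < ε

/-- A sequence of functionals is disjoint if any two distinct terms are lattice disjoint. -/
def DualDisjointSeq {E : Type*} [NormedAddCommGroup E] [Lattice E] [HasSolidNorm E]
    [IsOrderedAddMonoid E] [NormedSpace ℝ E]
    (f : ℕ → E →L[ℝ] ℝ) : Prop :=
  ∀ m k, m ≠ k → DualDisjoint (f m) (f k)

/-- A sequence of functionals is weak* null if it converges to `0` pointwise. -/
def WeakStarNull {E : Type*} [NormedAddCommGroup E] [NormedSpace ℝ E]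
    (f : ℕ → E →L[ℝ] ℝ) : Prop :=
  ∀ x : E, Tendsto (fun n => f n x) atTop (𝓝 (0 : ℝ))

/-- The sequence `(|f n|)` of moduli is weak* null (it suffices to test on positive
elements since `|f n|` is additive and every element is a difference of positives). -/
def AbsWeakStarNull {E : Type*} [NormedAddCommGroup E] [Lattice E] [HasSolidNorm E]
    [IsOrderedAddMonoid E] [NormedSpace ℝ E]
    (f : ℕ → E →L[ℝ] ℝ) : Prop :=
  ∀ x : E, 0 ≤ x → Tendsto (fun n => absFunctional (f n) x) atTop (𝓝 (0 : ℝ))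

/-- A functional is positive if it is nonnegative on the positive cone. -/
def PositiveFunctional {E : Type*} [NormedAddCommGroup E] [Lattice E] [HasSolidNorm E]
    [IsOrderedAddMonoid E] [NormedSpace ℝ E]
    (f : E →L[ℝ] ℝ) : Prop :=
  ∀ x : E, 0 ≤ x → 0 ≤ f x

/-- A norm bounded set `A` is almost limited if every disjoint weak* null sequence of
functionals converges to `0` uniformly on `A`. -/
def AlmostLimitedSet {E : Type*} [NormedAddCommGroup E] [Lattice E] [HasSolidNorm E]
    [IsOrderedAddMonoid E] [NormedSpace ℝ E]
    (A : Set E) : Prop :=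
  Bornology.IsBounded A ∧
    ∀ f : ℕ → E →L[ℝ] ℝ, DualDisjointSeq f → WeakStarNull f →
      TendstoUniformlyOn (fun n x => f n x) (fun _ => (0 : ℝ)) atTop A

/-- A norm bounded set `A` in a Banach space is limited if every weak* null sequence of
functionals converges to `0` uniformly on `A`. -/
def LimitedSet {X : Type*} [NormedAddCommGroup X] [NormedSpace ℝ X] (A : Set X) : Prop :=
  Bornology.IsBounded A ∧
    ∀ f : ℕ → X →L[ℝ] ℝ, WeakStarNull f →
      TendstoUniformlyOn (fun n x => f n x) (fun _ => (0 : ℝ)) atTop A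

/-- Property (d): for every disjoint weak* null sequence `(f n)`, `(|f n|)` is weak* null. -/
def PropertyD (E : Type*) [NormedAddCommGroup E] [Lattice E] [HasSolidNorm E]
    [IsOrderedAddMonoid E] [NormedSpace ℝ E] : Prop :=
  ∀ f : ℕ → E →L[ℝ] ℝ, DualDisjointSeq f → WeakStarNull f → AbsWeakStarNull f

/-- The lattice operations of the dual are weak* sequentially continuous: for every
weak* null sequence `(f n)`, `(|f n|)` is weak* null. -/
def DualLatticeWeakStarSeqCont (E : Type*) [NormedAddCommGroup E] [Lattice E] [HasSolidNorm E]
    [IsOrderedAddMonoid E]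
    [NormedSpace ℝ E] : Prop :=
  ∀ f : ℕ → E →L[ℝ] ℝ, WeakStarNull f → AbsWeakStarNull f

/-- A sequence in a Banach lattice is disjoint if the moduli of distinct terms meet at 0. -/
def LatticeDisjointSeq {E : Type*} [NormedAddCommGroup E] [Lattice E] [HasSolidNorm E]
    [IsOrderedAddMonoid E] (x : ℕ → E) : Prop :=
  ∀ m k, m ≠ k → |x m| ⊓ |x k| = 0

/-- A sequence is weakly null if `f (x n) → 0` for every continuous linear functional. -/
def WeaklyNull {E : Type*} [NormedAddCommGroup E] [NormedSpace ℝ E] (x : ℕ → E) : Prop :=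
  ∀ f : E →L[ℝ] ℝ, Tendsto (fun n => f (x n)) atTop (𝓝 (0 : ℝ))

/-- A set is solid if `x ∈ A` and `|y| ≤ |x|` imply `y ∈ A`. -/
def IsSolid {E : Type*} [NormedAddCommGroup E] [Lattice E] [HasSolidNorm E]
    [IsOrderedAddMonoid E] (A : Set E) : Prop :=
  ∀ x ∈ A, ∀ y : E, |y| ≤ |x| → y ∈ A

/-- The solid hull of a set. -/
def solidHull {E : Type*} [NormedAddCommGroup E] [Lattice E] [HasSolidNorm E]
    [IsOrderedAddMonoid E] (A : Set E) : Set E :=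
  {y | ∃ x ∈ A, |y| ≤ |x|}

/-- A set is almost order bounded if for every `ε > 0` it is contained in
`[-u, u] + ε B_E` for some positive `u`. -/
def AlmostOrderBounded {E : Type*} [NormedAddCommGroup E] [Lattice E] [HasSolidNorm E]
    [IsOrderedAddMonoid E] (A : Set E) : Prop :=
  ∀ ε : ℝ, 0 < ε → ∃ u : E, 0 ≤ u ∧ A ⊆ Set.Icc (-u) u + Metric.closedBall (0 : E) ε

/-- σ-Dedekind completeness: every countable nonempty set bounded above has a supremum. -/
def SigmaDedekindComplete (E : Type*) [NormedAddCommGroup E] [Lattice E] [HasSolidNorm E]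
    [IsOrderedAddMonoid E] : Prop :=
  ∀ s : Set E, s.Countable → s.Nonempty → BddAbove s → ∃ b : E, IsLUB s b

/-- A set is relatively weakly compact if its closure in the weak topology is compact. -/
def RelativelyWeaklyCompact {E : Type*} [NormedAddCommGroup E] [NormedSpace ℝ E]
    (A : Set E) : Prop :=
  IsCompact (closure ((toWeakSpace ℝ E) '' A))

/-- The weak Dunford–Pettis* property: every relatively weakly compact set is almost limited. -/
def WDPStar (E : Type*) [NormedAddCommGroup E] [Lattice E] [HasSolidNorm E]
    [IsOrderedAddMonoid E] [NormedSpace ℝ E] : Prop :=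
  ∀ A : Set E, RelativelyWeaklyCompact A → AlmostLimitedSet A

/-- The bi-sequence property: for each disjoint weakly null sequence in the positive cone
and each weak* null sequence of positive functionals, `f n (x n) → 0`. -/
def BiSequenceProperty (E : Type*) [NormedAddCommGroup E] [Lattice E] [HasSolidNorm E]
    [IsOrderedAddMonoid E] [NormedSpace ℝ E] : Prop :=
  ∀ x : ℕ → E, (∀ n, 0 ≤ x n) → LatticeDisjointSeq x → WeaklyNull x →
    ∀ f : ℕ → E →L[ℝ] ℝ, (∀ n, PositiveFunctional (f n)) → WeakStarNull f →
      Tendsto (fun n => f n (x n)) atTop (𝓝 (0 : ℝ))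

/-- The dual Schur property: every disjoint weak* null sequence of functionals is norm null. -/
def DualSchur (E : Type*) [NormedAddCommGroup E] [Lattice E] [HasSolidNorm E]
    [IsOrderedAddMonoid E] [NormedSpace ℝ E] : Prop :=
  ∀ f : ℕ → E →L[ℝ] ℝ, DualDisjointSeq f → WeakStarNull f →
    Tendsto (fun n => ‖f n‖) atTop (𝓝 (0 : ℝ))

/-- The dual positive Schur property: every weak* null sequence of positive functionals
is norm null. -/
def DualPositiveSchur (E : Type*) [NormedAddCommGroup E] [Lattice E] [HasSolidNorm E]
    [IsOrderedAddMonoid E] [NormedSpace ℝ E] : Prop :=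
  ∀ f : ℕ → E →L[ℝ] ℝ, (∀ n, PositiveFunctional (f n)) → WeakStarNull f →
    Tendsto (fun n => ‖f n‖) atTop (𝓝 (0 : ℝ))

/-- The norm of a Banach lattice is order continuous: every net decreasing to `0`
converges to `0` in norm. -/
def OrderContinuousNorm (E : Type*) [NormedAddCommGroup E] [Lattice E] [HasSolidNorm E]
    [IsOrderedAddMonoid E] : Prop :=
  ∀ {ι : Type*} [Preorder ι] [IsDirected ι (· ≤ ·)] [Nonempty ι] (x : ι → E),
    Antitone x → IsGLB (Set.range x) 0 → Tendsto (fun i => ‖x i‖) atTop (𝓝 (0 : ℝ))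

/-- The norm of the dual Banach lattice is order continuous: every net of functionals
decreasing to `0` (in the dual order, i.e., pointwise on the positive cone, with greatest
lower bound `0`) converges to `0` in norm. -/
def DualOrderContinuousNorm (E : Type*) [NormedAddCommGroup E] [Lattice E] [HasSolidNorm E]
    [IsOrderedAddMonoid E]
    [NormedSpace ℝ E] : Prop :=
  ∀ {ι : Type*} [Preorder ι] [IsDirected ι (· ≤ ·)] [Nonempty ι] (f : ι → E →L[ℝ] ℝ),
    (∀ i j, i ≤ j → ∀ x : E, 0 ≤ x → f j x ≤ f i x) →
    (∀ i, PositiveFunctional (f i)) →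
    (∀ g : E →L[ℝ] ℝ, (∀ i, ∀ x : E, 0 ≤ x → g x ≤ f i x) → ∀ x : E, 0 ≤ x → g x ≤ 0) →
    Tendsto (fun i => ‖f i‖) atTop (𝓝 (0 : ℝ))

/-- A norm bounded set `A` is L-weakly compact if every disjoint sequence in its solid
hull is norm null. -/
def LWeaklyCompactSet {E : Type*} [NormedAddCommGroup E] [Lattice E] [HasSolidNorm E]
    [IsOrderedAddMonoid E] (A : Set E) : Prop :=
  Bornology.IsBounded A ∧
    ∀ y : ℕ → E, (∀ n, y n ∈ solidHull A) → LatticeDisjointSeq y →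
      Tendsto (fun n => ‖y n‖) atTop (𝓝 (0 : ℝ))

/-- An atom of a Banach lattice. -/
def IsLatticeAtom {E : Type*} [NormedAddCommGroup E] [Lattice E] [HasSolidNorm E]
    [IsOrderedAddMonoid E] (a : E) : Prop :=
  0 < a ∧ ∀ x y : E, 0 ≤ x → x ≤ a → 0 ≤ y → y ≤ a → x ⊓ y = 0 → x = 0 ∨ y = 0

/-- A Banach lattice is discrete (atomic) if the band generated by its atoms is the whole
lattice; equivalently, the only element disjoint from all atoms is `0`. -/
def DiscreteBanachLattice (E : Type*) [NormedAddCommGroup E] [Lattice E] [HasSolidNorm E]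
    [IsOrderedAddMonoid E] : Prop :=
  ∀ x : E, (∀ a : E, IsLatticeAtom a → |x| ⊓ a = 0) → x = 0

/-- A linear operator between Banach lattices is order bounded if it maps order intervals
into order intervals. -/
def OrderBoundedOperator {E F : Type*} [NormedAddCommGroup E] [Lattice E] [HasSolidNorm E]
    [IsOrderedAddMonoid E] [NormedSpace ℝ E]
    [NormedAddCommGroup F] [Lattice F] [HasSolidNorm F]
    [IsOrderedAddMonoid F] [NormedSpace ℝ F] (T : E →ₗ[ℝ] F) : Prop :=
  ∀ a b : E, ∃ c d : F, T '' Set.Icc a b ⊆ Set.Icc c d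

/-! By the Riesz–Kantorovich formula, `|f| x = sup {f u : |u| ≤ x} = sup {|f u| : |u| ≤ x}`
is the uniform norm of `f` on `[-x, x]`, so `f n → 0` uniformly on `[-x, x]` exactly when
`|f n| x → 0`. -/

lemma setOf_abs_le_eq_Icc {α : Type*} [Lattice α] [AddCommGroup α] [IsOrderedAddMonoid α]
    (x : α) : {u : α | |u| ≤ x} = Set.Icc (-x) x := by
  ext u
  simp only [Set.mem_ofPred_eq, Set.mem_Icc, abs_le', neg_le, and_comm]

section absFunctional

variable {E : Type*} [NormedAddCommGroup E] [Lattice E] [HasSolidNorm E]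
  [IsOrderedAddMonoid E]

lemma norm_le_of_abs_le {u x : E} (h : |u| ≤ x) : ‖u‖ ≤ ‖x‖ :=
  norm_le_norm_of_abs_le_abs (h.trans_eq (abs_of_nonneg ((abs_nonneg u).trans h)).symm)

lemma isBounded_setOf_abs_le (x : E) : Bornology.IsBounded {u : E | |u| ≤ x} :=
  (isBounded_closedBall (x := 0) (r := ‖x‖)).subset fun _ hu =>
    mem_closedBall_zero_iff.2 (norm_le_of_abs_le hu)

variable [NormedSpace ℝ E]

lemma bddAbove_image_setOf_abs_le (f : E →L[ℝ] ℝ) (x : E) :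
    BddAbove ((fun u => f u) '' {u : E | |u| ≤ x}) := by
  refine ⟨‖f‖ * ‖x‖, ?_⟩
  rintro _ ⟨u, hu, rfl⟩
  calc f u ≤ ‖f u‖ := le_abs_self _
    _ ≤ ‖f‖ * ‖u‖ := f.le_opNorm u
    _ ≤ ‖f‖ * ‖x‖ := by gcongr; exact norm_le_of_abs_le hu

variable {x : E}

lemma absFunctional_le_iff (f : E →L[ℝ] ℝ) (hx : 0 ≤ x) {c : ℝ} :
    absFunctional f x ≤ c ↔ ∀ u : E, |u| ≤ x → |f u| ≤ c := by
  have hne : ((fun u => f u) '' {u : E | |u| ≤ x}).Nonempty :=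
    ⟨f 0, 0, by simpa using hx, rfl⟩
  rw [absFunctional, csSup_le_iff (bddAbove_image_setOf_abs_le f x) hne,
    Set.forall_mem_image]
  refine ⟨fun h u hu => abs_le'.2 ⟨h hu, ?_⟩, fun h u hu => (le_abs_self _).trans (h u hu)⟩
  simpa using h (x := -u) (by rwa [Set.mem_ofPred_eq, abs_neg])

lemma absFunctional_nonneg (f : E →L[ℝ] ℝ) (hx : 0 ≤ x) : 0 ≤ absFunctional f x :=
  le_csSup (bddAbove_image_setOf_abs_le f x) ⟨0, by simpa using hx, map_zero f⟩

lemma tendstoUniformlyOn_setOf_abs_le_iff {ι : Type*} {l : Filter ι} {f : ι → E →L[ℝ] ℝ}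
    (hx : 0 ≤ x) :
    TendstoUniformlyOn (fun n u => f n u) (fun _ => 0) l {u : E | |u| ≤ x} ↔
      Tendsto (fun n => absFunctional (f n) x) l (𝓝 0) := by
  simp only [Metric.tendstoUniformlyOn_iff, Metric.tendsto_nhds, Real.dist_eq, sub_zero, zero_sub,
    abs_neg]
  refine ⟨fun h ε hε => ?_, fun h ε hε => ?_⟩
  · filter_upwards [h (ε / 2) (half_pos hε)] with n hn
    rw [abs_of_nonneg (absFunctional_nonneg _ hx)]
    exact ((absFunctional_le_iff _ hx).2 fun u hu => (hn u hu).le).trans_lt (half_lt_self hε)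
  · filter_upwards [h ε hε] with n hn u hu
    exact ((absFunctional_le_iff _ hx).1 le_rfl u hu).trans_lt ((le_abs_self _).trans_lt hn)

end absFunctional

theorem statement1_general {E : Type*} [NormedAddCommGroup E] [Lattice E] [HasSolidNorm E]
    [IsOrderedAddMonoid E] [NormedSpace ℝ E] :
    (∀ x : E, 0 ≤ x → LimitedSet (Set.Icc (-x) x)) ↔ DualLatticeWeakStarSeqCont E := by
  simp_rw [← setOf_abs_le_eq_Icc]
  constructor
  · intro hlimited f hf x hx
    exact (tendstoUniformlyOn_setOf_abs_le_iff hx).1 ((hlimited x hx).2 f hf)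
  · intro hcont x hx
    exact ⟨isBounded_setOf_abs_le x,
      fun f hf => (tendstoUniformlyOn_setOf_abs_le_iff hx).2 (hcont f hf x hx)⟩

/-- Every order interval `[-x, x]` (for `x ≥ 0`) of a Banach lattice `E` is
limited if and only if the lattice operations of `E*` are weak* sequentially continuous. -/
theorem statement1 {E : Type*} [NormedAddCommGroup E] [Lattice E] [HasSolidNorm E]
    [IsOrderedAddMonoid E] [NormedSpace ℝ E]
    [CompleteSpace E] :
    (∀ x : E, 0 ≤ x → LimitedSet (Set.Icc (-x) x)) ↔ DualLatticeWeakStarSeqCont E :=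
  statement1_general
end

section
/- Let E be a Banach lattice. If the lattice operations of E* are weak* sequentially continuous, then every almost limited solid subset of E is limited. -/
open Filter Topology Metric Pointwise

/-!
Write `|f|` for the modulus of a functional. By hypothesis `(|fₙ|)` is weak* null whenever `(fₙ)`
is, and `|fₙ x| ≤ |fₙ| |x|` with `|x| ∈ A` by solidity, so it suffices that `Qₙ aₙ → 0` for every
weak* null sequence of positive functionals `Qₙ` and positive `aₙ ∈ A`. If instead `Qₙ aₙ ≥ ε`,
pass to a subsequence so sparse that `Q_{n_{j+1}}` is tiny on `a_{n_0} + ⋯ + a_{n_j}`. With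
`X = ∑ 2⁻ᵏ a_{n_k}`, the elements `y_j = (a_{n_{j+1}} - 4ʲ ∑_{i ≤ j} a_{n_i} - 2⁻ʲ X)⁺` are pairwise
disjoint, and the components `g_j` of `Q_{n_{j+1}}` in the bands generated by the `y_j` form a
disjoint weak* null sequence with `g_j a_{n_{j+1}} > ε / 2`, contradicting almost limitedness.
-/

section LatticeOrderedGroup

variable {α : Type*} [AddCommGroup α] [Lattice α] [IsOrderedAddMonoid α]

lemma inf_add_le_inf_add_inf {u v w : α} (hu : 0 ≤ u) (hv : 0 ≤ v) (hw : 0 ≤ w) :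
    u ⊓ (v + w) ≤ u ⊓ v + u ⊓ w := by
  have h_sub_v : u ⊓ (v + w) - u ⊓ v ≤ w := by
    rw [sub_le_comm]
    refine le_inf ((sub_le_sub_right inf_le_left w).trans (sub_le_self u hw)) ?_
    exact sub_le_iff_le_add.mpr inf_le_right
  have h_sub_u : u ⊓ (v + w) - u ⊓ v ≤ u :=
    sub_le_iff_le_add.mpr (inf_le_left.trans (le_add_of_nonneg_right (le_inf hu hv)))
  calc u ⊓ (v + w) = u ⊓ v + (u ⊓ (v + w) - u ⊓ v) := by abel
    _ ≤ u ⊓ v + u ⊓ w := add_le_add_right (le_inf h_sub_u h_sub_v) _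

lemma inf_nsmul_eq_zero {u w : α} (hu : 0 ≤ u) (hw : 0 ≤ w) (h : u ⊓ w = 0) (m : ℕ) :
    u ⊓ m • w = 0 := by
  induction m with
  | zero => simp [hu]
  | succ m ih =>
    refine le_antisymm ?_ (le_inf hu (nsmul_nonneg hw _))
    simpa [succ_nsmul, ih, h] using inf_add_le_inf_add_inf hu (nsmul_nonneg hw m) hw

lemma nsmul_inf_nsmul_eq_zero {u w : α} (hu : 0 ≤ u) (hw : 0 ≤ w) (h : u ⊓ w = 0) (m k : ℕ) :
    m • u ⊓ k • w = 0 := by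
  rw [inf_comm]
  refine inf_nsmul_eq_zero (nsmul_nonneg hw k) hu ?_ m
  rw [inf_comm, inf_nsmul_eq_zero hu hw h]

lemma nonneg_of_nsmul_nonneg {v : α} {n : ℕ} (hn : n ≠ 0) (h : 0 ≤ n • v) : 0 ≤ v := by
  have h_le : n • v⁻ ≤ n • v⁺ := by
    rwa [← sub_nonneg, ← nsmul_sub, posPart_sub_negPart]
  have h_zero : n • v⁻ = 0 := by
    rw [← nsmul_inf_nsmul_eq_zero (posPart_nonneg v) (negPart_nonneg v)
      (posPart_inf_negPart_eq_zero v) n n, inf_eq_right.mpr h_le]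
  have h_neg : v⁻ = 0 :=
    le_antisymm (h_zero ▸ le_self_nsmul (negPart_nonneg v) hn) (negPart_nonneg v)
  rw [← posPart_sub_negPart v, h_neg, sub_zero]
  exact posPart_nonneg v

lemma posPart_inf (a b : α) : (a ⊓ b)⁺ = a⁺ ⊓ b⁺ :=
  letI := AddCommGroup.toDistribLattice α
  sup_inf_right a b 0

lemma exists_abs_le_and_abs_sub_le {u a b : α} (ha : 0 ≤ a) (hb : 0 ≤ b) (h : |u| ≤ a + b) :
    ∃ v, |v| ≤ a ∧ |u - v| ≤ b := by
  obtain ⟨hu_le, hu_ge⟩ := abs_le'.mp h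
  refine ⟨(u ⊔ -a) ⊓ a,
    abs_le'.mpr ⟨inf_le_right, neg_le.mpr (le_inf le_sup_right (neg_le_self ha))⟩,
    abs_le'.mpr ⟨?_, ?_⟩⟩
  · rw [sub_le_comm]
    exact le_inf (le_sup_of_le_left (sub_le_self u hb)) (sub_le_iff_le_add.mpr hu_le)
  · rw [neg_sub, sub_le_iff_le_add]
    refine inf_le_of_left_le (sup_le (le_add_of_nonneg_left hb) ?_)
    calc -a = b + -(a + b) := by abel
      _ ≤ b + u := add_le_add le_rfl (neg_le.mp hu_ge)

end LatticeOrderedGroup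

section NormedLattice

variable {E : Type*} [NormedAddCommGroup E] [Lattice E] [HasSolidNorm E] [IsOrderedAddMonoid E]
  [NormedSpace ℝ E]

lemma smul_nonneg_of_hasSolidNorm {c : ℝ} (hc : 0 ≤ c) {x : E} (hx : 0 ≤ x) : 0 ≤ c • x := by
  -- No compatibility of the order with real scalars is assumed: `(k / n) • x ≥ 0` because its
  -- `n`-th multiple is `k • x`, and the positive cone is closed.
  have h_ratio : ∀ k n : ℕ, 0 ≤ ((k : ℝ) / n) • x := by
    intro k n
    rcases eq_or_ne n 0 with rfl | hn
    · simp
    refine nonneg_of_nsmul_nonneg hn ?_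
    rw [← Nat.cast_smul_eq_nsmul ℝ, smul_smul, mul_div_cancel₀ _ (Nat.cast_ne_zero.mpr hn),
      Nat.cast_smul_eq_nsmul]
    exact nsmul_nonneg hx k
  have h_lim : Tendsto (fun n : ℕ => ((⌊c * n⌋₊ : ℝ) / n) • x) atTop (𝓝 (c • x)) :=
    ((tendsto_nat_floor_mul_div_atTop hc).comp tendsto_natCast_atTop_atTop).smul_const x
  exact isClosed_nonneg.mem_of_tendsto h_lim (Eventually.of_forall fun n => h_ratio _ n)

instance HasSolidNorm.posSMulMono : PosSMulMono ℝ E :=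
  PosSMulMono.of_smul_nonneg fun _ hc _ hx => smul_nonneg_of_hasSolidNorm hc hx

end NormedLattice

section Functionals

variable {E : Type*} [NormedAddCommGroup E] [Lattice E] [HasSolidNorm E] [IsOrderedAddMonoid E]
  [NormedSpace ℝ E]

lemma PositiveFunctional.mono {h : E →L[ℝ] ℝ} (hh : PositiveFunctional h) {x y : E}
    (hxy : x ≤ y) : h x ≤ h y := by
  simpa using hh (y - x) (sub_nonneg.mpr hxy)

lemma PositiveFunctional.abs_apply_le {h : E →L[ℝ] ℝ} (hh : PositiveFunctional h) (x : E) :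
    |h x| ≤ h |x| :=
  abs_le.mpr ⟨by simpa using hh.mono (neg_le.mp (neg_le_abs x)), hh.mono (le_abs_self x)⟩

lemma exists_clm_eq_on_cone (p : E → ℝ) (hadd : ∀ x y, 0 ≤ x → 0 ≤ y → p (x + y) = p x + p y)
    (hnonneg : ∀ x, 0 ≤ x → 0 ≤ p x) (C : ℝ) (hbound : ∀ x, 0 ≤ x → p x ≤ C * ‖x‖) :
    ∃ g : E →L[ℝ] ℝ, ∀ x, 0 ≤ x → g x = p x := by
  have hzero : p 0 = 0 := by simpa using hadd 0 0 le_rfl le_rfl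
  have hmap_add (x y : E) : p (x + y)⁺ - p (x + y)⁻ = (p x⁺ - p x⁻) + (p y⁺ - p y⁻) := by
    have hparts : (x + y)⁺ + (x⁻ + y⁻) = (x + y)⁻ + (x⁺ + y⁺) := by
      have := congrArg₂ (· + ·) (posPart_sub_negPart x) (posPart_sub_negPart y)
      rw [← posPart_sub_negPart (x + y)] at this
      linear_combination (norm := abel) this.symm
    have := congrArg p hparts
    rw [hadd _ _ (posPart_nonneg _) (add_nonneg (negPart_nonneg x) (negPart_nonneg y)),
      hadd _ _ (negPart_nonneg _) (add_nonneg (posPart_nonneg x) (posPart_nonneg y)),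
      hadd _ _ (negPart_nonneg x) (negPart_nonneg y),
      hadd _ _ (posPart_nonneg x) (posPart_nonneg y)] at this
    linarith
  let q : E →+ ℝ := AddMonoidHom.mk' (fun x => p x⁺ - p x⁻) hmap_add
  have hq_bound (x : E) : ‖q x‖ ≤ C * ‖x‖ := by
    have h₁ := hnonneg _ (posPart_nonneg x)
    have h₂ := hnonneg _ (negPart_nonneg x)
    calc ‖q x‖ = |p x⁺ - p x⁻| := rfl
      _ ≤ p x⁺ + p x⁻ := abs_sub_le_iff.mpr ⟨by linarith, by linarith⟩
      _ = p |x| := by rw [← hadd _ _ (posPart_nonneg x) (negPart_nonneg x), posPart_add_negPart]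
      _ ≤ C * ‖x‖ := by simpa [norm_abs_eq_norm] using hbound |x| (abs_nonneg x)
  refine ⟨q.toRealLinearMap (AddMonoidHomClass.continuous_of_bound q C hq_bound), fun x hx => ?_⟩
  change p x⁺ - p x⁻ = p x
  rw [posPart_eq_self.mpr hx, negPart_eq_zero.mpr hx, hzero, sub_zero]

end Functionals

section AbsFunctional

variable {E : Type*} [NormedAddCommGroup E] [Lattice E] [HasSolidNorm E] [IsOrderedAddMonoid E]
  [NormedSpace ℝ E] (f : E →L[ℝ] ℝ)

lemma bddAbove_image_abs_le (a : E) : BddAbove ((fun u => f u) '' {u : E | |u| ≤ a}) := by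
  refine ⟨‖f‖ * ‖a‖, ?_⟩
  rintro _ ⟨u, hu, rfl⟩
  have hnorm : ‖u‖ ≤ ‖a‖ := norm_le_norm_of_abs_le_abs (abs_abs u ▸ hu.trans (le_abs_self a))
  exact (le_abs_self _).trans ((f.le_opNorm u).trans (by gcongr))

omit [HasSolidNorm E] in
lemma image_abs_le_nonempty {a : E} (ha : 0 ≤ a) :
    ((fun u => f u) '' {u : E | |u| ≤ a}).Nonempty :=
  ⟨f 0, 0, by simpa using ha, rfl⟩

lemma le_absFunctional {a u : E} (hu : |u| ≤ a) : f u ≤ absFunctional f a :=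
  le_csSup (bddAbove_image_abs_le f a) ⟨u, hu, rfl⟩

lemma abs_apply_le_absFunctional {a u : E} (hu : |u| ≤ a) : |f u| ≤ absFunctional f a :=
  abs_le.mpr ⟨neg_le.mp (by simpa using le_absFunctional f (show |-u| ≤ a by rwa [abs_neg])),
    le_absFunctional f hu⟩

lemma absFunctional_nonneg_s7 {a : E} (ha : 0 ≤ a) : 0 ≤ absFunctional f a := by
  simpa using le_absFunctional f (show |(0 : E)| ≤ a by simpa using ha)

lemma absFunctional_le {a : E} (ha : 0 ≤ a) : absFunctional f a ≤ ‖f‖ * ‖a‖ :=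
  csSup_le (image_abs_le_nonempty f ha) fun _ ⟨u, hu, hfu⟩ => hfu ▸
    (le_abs_self _).trans ((f.le_opNorm u).trans
      (by gcongr; exact norm_le_norm_of_abs_le_abs (abs_abs u ▸ hu.trans (le_abs_self a))))

lemma absFunctional_add {a b : E} (ha : 0 ≤ a) (hb : 0 ≤ b) :
    absFunctional f (a + b) = absFunctional f a + absFunctional f b := by
  have himage : (fun u => f u) '' {u : E | |u| ≤ a + b} =
      (fun u => f u) '' {u : E | |u| ≤ a} + (fun u => f u) '' {u : E | |u| ≤ b} := by
    ext r
    constructor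
    · rintro ⟨u, hu, rfl⟩
      obtain ⟨v, hv, huv⟩ := exists_abs_le_and_abs_sub_le ha hb hu
      exact ⟨f v, ⟨v, hv, rfl⟩, f (u - v), ⟨u - v, huv, rfl⟩, by simp⟩
    · rintro ⟨_, ⟨v, hv, rfl⟩, _, ⟨w, hw, rfl⟩, rfl⟩
      exact ⟨v + w, (abs_add_le v w).trans (add_le_add hv hw), map_add f v w⟩
  rw [absFunctional, himage, csSup_add (image_abs_le_nonempty f ha) (bddAbove_image_abs_le f a)
    (image_abs_le_nonempty f hb) (bddAbove_image_abs_le f b)]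
  rfl

lemma PositiveFunctional.absFunctional_eq {h : E →L[ℝ] ℝ} (hh : PositiveFunctional h) {a : E}
    (ha : 0 ≤ a) : absFunctional h a = h a :=
  le_antisymm
    (csSup_le (image_abs_le_nonempty h ha) fun _ ⟨u, hu, hhu⟩ =>
      hhu ▸ (le_abs_self _).trans ((hh.abs_apply_le u).trans (hh.mono hu)))
    (le_absFunctional h (abs_of_nonneg ha).le)

lemma exists_clm_eq_absFunctional :
    ∃ g : E →L[ℝ] ℝ, PositiveFunctional g ∧ ∀ x, 0 ≤ x → g x = absFunctional f x := by
  obtain ⟨g, hg⟩ := exists_clm_eq_on_cone (absFunctional f)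
    (fun _ _ hx hy => absFunctional_add f hx hy) (fun _ hx => absFunctional_nonneg_s7 f hx) ‖f‖
    (fun _ hx => absFunctional_le f hx)
  exact ⟨g, fun x hx => hg x hx ▸ absFunctional_nonneg_s7 f hx, hg⟩

end AbsFunctional

section Component

variable {E : Type*} [NormedAddCommGroup E] [Lattice E] [HasSolidNorm E] [IsOrderedAddMonoid E]
  [NormedSpace ℝ E] {P : E →L[ℝ] ℝ} {w : E}

/-- On positive `x`, this is the value at `x` of the component of `P` in the band generated by
`w`. -/
noncomputable def componentFun (P : E →L[ℝ] ℝ) (w x : E) : ℝ :=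
  ⨆ m : ℕ, P (x ⊓ m • w)

lemma le_componentFun (hP : PositiveFunctional P) (x : E) (m : ℕ) :
    P (x ⊓ m • w) ≤ componentFun P w x :=
  le_ciSup (f := fun k : ℕ => P (x ⊓ k • w))
    ⟨P x, by rintro _ ⟨k, rfl⟩; exact hP.mono inf_le_left⟩ m

lemma componentFun_le (hP : PositiveFunctional P) (x : E) : componentFun P w x ≤ P x :=
  ciSup_le fun _ => hP.mono inf_le_left

lemma componentFun_nonneg (hP : PositiveFunctional P) {x : E} (hx : 0 ≤ x) :
    0 ≤ componentFun P w x := by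
  simpa [hx] using le_componentFun hP (w := w) x 0

lemma componentFun_add (hP : PositiveFunctional P) (hw : 0 ≤ w) {a b : E} (ha : 0 ≤ a)
    (hb : 0 ≤ b) : componentFun P w (a + b) = componentFun P w a + componentFun P w b := by
  apply le_antisymm
  · refine ciSup_le fun m => ?_
    have hsplit : (a + b) ⊓ m • w ≤ a ⊓ m • w + b ⊓ m • w := by
      simpa only [inf_comm _ (m • w)] using inf_add_le_inf_add_inf (nsmul_nonneg hw m) ha hb
    calc P ((a + b) ⊓ m • w) ≤ P (a ⊓ m • w) + P (b ⊓ m • w) := map_add P _ _ ▸ hP.mono hsplit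
      _ ≤ componentFun P w a + componentFun P w b :=
        add_le_add (le_componentFun hP a m) (le_componentFun hP b m)
  · rw [← le_sub_iff_add_le]
    refine ciSup_le fun m => ?_
    rw [le_sub_iff_add_le', ← le_sub_iff_add_le]
    refine ciSup_le fun k => ?_
    rw [le_sub_iff_add_le', ← map_add]
    refine (hP.mono (le_inf (add_le_add inf_le_left inf_le_left) ?_)).trans
      (le_componentFun hP _ (m + k))
    rw [add_nsmul]
    exact add_le_add inf_le_right inf_le_right

lemma exists_clm_eq_componentFun (hP : PositiveFunctional P) (hw : 0 ≤ w) :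
    ∃ g : E →L[ℝ] ℝ, ∀ x, 0 ≤ x → g x = componentFun P w x :=
  exists_clm_eq_on_cone (componentFun P w) (fun _ _ ha hb => componentFun_add hP hw ha hb)
    (fun _ hx => componentFun_nonneg hP hx) ‖P‖
    (fun x _ => (componentFun_le hP x).trans ((le_abs_self _).trans (P.le_opNorm x)))

lemma dualDisjoint_of_eq_componentFun {P' g g' : E →L[ℝ] ℝ} {w' : E}
    (hP : PositiveFunctional P) (hP' : PositiveFunctional P') (hw : 0 ≤ w) (hw' : 0 ≤ w')
    (hdisj : w ⊓ w' = 0) (hg : ∀ x, 0 ≤ x → g x = componentFun P w x)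
    (hg' : ∀ x, 0 ≤ x → g' x = componentFun P' w' x) : DualDisjoint g g' := by
  have hg_pos : PositiveFunctional g := fun x hx => hg x hx ▸ componentFun_nonneg hP hx
  have hg'_pos : PositiveFunctional g' := fun x hx => hg' x hx ▸ componentFun_nonneg hP' hx
  intro x hx ε hε
  obtain ⟨m, hm⟩ : ∃ m : ℕ, g x - ε < P (x ⊓ m • w) :=
    exists_lt_of_lt_ciSup (hg x hx ▸ sub_lt_self (g x) hε)
  have hxm : 0 ≤ x ⊓ m • w := le_inf hx (nsmul_nonneg hw m)
  have hy : 0 ≤ x - x ⊓ m • w := sub_nonneg.mpr inf_le_left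
  refine ⟨x - x ⊓ m • w, hy, sub_le_self x hxm, ?_⟩
  have hg_ge : P (x ⊓ m • w) ≤ g (x ⊓ m • w) := by
    simpa [hg _ hxm, inf_assoc] using le_componentFun hP (w := w) (x ⊓ m • w) m
  have hg'_zero : g' (x ⊓ m • w) = 0 := by
    have hterm (k : ℕ) : x ⊓ m • w ⊓ k • w' = 0 :=
      le_antisymm ((inf_le_inf_right _ inf_le_right).trans_eq
        (nsmul_inf_nsmul_eq_zero hw hw' hdisj m k)) (le_inf hxm (nsmul_nonneg hw' k))
    simp [hg' _ hxm, componentFun, hterm]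
  rw [hg_pos.absFunctional_eq hy, sub_sub_cancel, hg'_pos.absFunctional_eq hxm, hg'_zero,
    map_sub]
  linarith

end Component

section Disjointify

variable {E : Type*} [AddCommGroup E] [Lattice E] [IsOrderedAddMonoid E] [Module ℝ E]
  [PosSMulMono ℝ E]

noncomputable def disjointShift (u : ℕ → E) (X : E) (j : ℕ) : E :=
  (4 : ℝ) ^ j • ∑ i ∈ Finset.range (j + 1), u i + (2⁻¹ : ℝ) ^ j • X

lemma disjointShift_nonneg {u : ℕ → E} {X : E} (hu : ∀ k, 0 ≤ u k) (hX : 0 ≤ X) (j : ℕ) :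
    0 ≤ disjointShift u X j :=
  add_nonneg (smul_nonneg (by positivity) (Finset.sum_nonneg fun i _ => hu i))
    (smul_nonneg (by positivity) hX)

lemma posPart_sub_disjointShift_inf_eq_zero {u : ℕ → E} {X : E} (hu : ∀ k, 0 ≤ u k)
    (hX : 0 ≤ X) (huX : ∀ k, u k ≤ (2 : ℝ) ^ k • X) {n m : ℕ} (hnm : n ≠ m) :
    (u (n + 1) - disjointShift u X n)⁺ ⊓ (u (m + 1) - disjointShift u X m)⁺ = 0 := by
  wlog hlt : n < m generalizing n m
  · rw [inf_comm]
    exact this hnm.symm (hnm.lt_or_gt.resolve_left hlt)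
  -- Both terms are dominated by `a` and `b` below, and `4 ^ m • a + b ≤ 0`.
  set a := u (n + 1) - (2⁻¹ : ℝ) ^ n • X
  set b := (2 : ℝ) ^ (m + 1) • X - (4 : ℝ) ^ m • u (n + 1)
  have hsum_nonneg (j : ℕ) : 0 ≤ ∑ i ∈ Finset.range (j + 1), u i :=
    Finset.sum_nonneg fun i _ => hu i
  have hn_le : u (n + 1) - disjointShift u X n ≤ a :=
    sub_le_sub_left (le_add_of_nonneg_left (smul_nonneg (by positivity) (hsum_nonneg n))) _
  have hm_le : u (m + 1) - disjointShift u X m ≤ b := by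
    have hmem : u (n + 1) ≤ ∑ i ∈ Finset.range (m + 1), u i :=
      Finset.single_le_sum (fun i _ => hu i) (Finset.mem_range.mpr (by omega))
    refine sub_le_sub (huX (m + 1)) ?_
    exact (smul_le_smul_of_nonneg_left hmem (by positivity)).trans
      (le_add_of_nonneg_right (smul_nonneg (by positivity) hX))
  have hcoeff : (2 : ℝ) ^ (m + 1) ≤ 4 ^ m * 2⁻¹ ^ n := by
    rw [show (4 : ℝ) = 2 ^ 2 by norm_num, ← pow_mul, inv_pow, ← div_eq_mul_inv,
      le_div_iff₀ (by positivity), ← pow_add]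
    exact pow_le_pow_right₀ (by norm_num) (by omega)
  have hab : a ⊓ b ≤ 0 := by
    have hcomb : (4 : ℝ) ^ m • a + b = ((2 : ℝ) ^ (m + 1) - 4 ^ m * 2⁻¹ ^ n) • X := by
      simp only [a, b]
      module
    refine (smul_nonpos_iff_nonpos_of_pos_left (by positivity : (0 : ℝ) < 4 ^ m + 1)).mp ?_
    calc ((4 : ℝ) ^ m + 1) • (a ⊓ b) = (4 : ℝ) ^ m • (a ⊓ b) + a ⊓ b := by rw [add_smul, one_smul]
      _ ≤ (4 : ℝ) ^ m • a + b :=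
        add_le_add (smul_le_smul_of_nonneg_left inf_le_left (by positivity)) inf_le_right
      _ ≤ 0 := hcomb ▸ smul_nonpos_of_nonpos_of_nonneg (sub_nonpos.mpr hcoeff) hX
  refine le_antisymm ?_ (le_inf (posPart_nonneg _) (posPart_nonneg _))
  calc (u (n + 1) - disjointShift u X n)⁺ ⊓ (u (m + 1) - disjointShift u X m)⁺
      ≤ a⁺ ⊓ b⁺ := inf_le_inf (posPart_mono hn_le) (posPart_mono hm_le)
    _ = 0 := by rw [← posPart_inf, posPart_eq_zero.mpr hab]

end Disjointify

lemma exists_strictMono_apply_sum_le {M : Type*} [AddCommMonoid M] [PartialOrder M]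
    [IsOrderedAddMonoid M] {Q : ℕ → M → ℝ} (hQ : ∀ v, 0 ≤ v → Tendsto (fun n => Q n v) atTop (𝓝 0))
    {a : ℕ → M} (ha : ∀ k, 0 ≤ a k) {δ : ℕ → ℝ} (hδ : ∀ j, 0 < δ j) :
    ∃ φ : ℕ → ℕ, StrictMono φ ∧
      ∀ j, Q (φ (j + 1)) (∑ i ∈ Finset.range (j + 1), a (φ i)) ≤ δ j := by
  have hstep (j p : ℕ) (s : M) : ∃ n, p < n ∧ (0 ≤ s → Q n s ≤ δ j) := by
    by_cases hs : 0 ≤ s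
    · obtain ⟨n, hpn, hn⟩ :=
        ((eventually_gt_atTop p).and ((hQ s hs).eventually (ge_mem_nhds (hδ j)))).exists
      exact ⟨n, hpn, fun _ => hn⟩
    · exact ⟨p + 1, p.lt_succ_self, fun h => absurd h hs⟩
  choose next hnext_gt hnext_le using hstep
  -- Recursively build the pairs (chosen index, partial sum of the chosen terms so far).
  let ψ : ℕ → ℕ × M := fun j =>
    Nat.rec (0, a 0) (fun j st => (next j st.1 st.2, st.2 + a (next j st.1 st.2))) j
  have hψ_sum (j : ℕ) : (ψ j).2 = ∑ i ∈ Finset.range (j + 1), a (ψ i).1 := by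
    induction j with
    | zero => simp [ψ]
    | succ j ih => rw [Finset.sum_range_succ, ← ih]
  refine ⟨fun j => (ψ j).1, strictMono_nat_of_lt_succ fun j => hnext_gt j _ _, fun j => ?_⟩
  rw [← hψ_sum]
  exact hnext_le j _ _ (hψ_sum j ▸ Finset.sum_nonneg fun i _ => ha _)

lemma tendstoUniformlyOn_zero_of_forall_tendsto {α : Type*} {F : ℕ → α → ℝ} {A : Set α}
    (h : ∀ x : ℕ → α, (∀ n, x n ∈ A) → Tendsto (fun n => F n (x n)) atTop (𝓝 0)) :
    TendstoUniformlyOn F (fun _ => 0) atTop A := by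
  rcases A.eq_empty_or_nonempty with rfl | ⟨x₀, hx₀⟩
  · exact tendstoUniformlyOn_empty
  rw [Metric.tendstoUniformlyOn_iff]
  intro ε hε
  have hwitness (n : ℕ) : ∃ x ∈ A, ∀ y ∈ A, ε ≤ |F n y| → ε ≤ |F n x| := by
    by_cases hdev : ∃ y ∈ A, ε ≤ |F n y|
    · obtain ⟨y, hy, hle⟩ := hdev
      exact ⟨y, hy, fun _ _ _ => hle⟩
    · exact ⟨x₀, hx₀, fun y hy hle => (hdev ⟨y, hy, hle⟩).elim⟩
  choose x hxA hx using hwitness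
  filter_upwards [(h x hxA).abs.eventually (gt_mem_nhds (by simpa using hε))] with n hn y hy
  rw [dist_zero_left, Real.norm_eq_abs]
  by_contra! hle
  exact (hx n y hy hle).not_gt (by simpa using hn)

section Sequences

variable {E : Type*} [NormedAddCommGroup E] [Lattice E] [HasSolidNorm E] [IsOrderedAddMonoid E]
  [NormedSpace ℝ E]

lemma exists_nonneg_forall_le_two_pow_smul [CompleteSpace E] {u : ℕ → E} (hu : ∀ k, 0 ≤ u k)
    {M : ℝ} (hM : ∀ k, ‖u k‖ ≤ M) : ∃ X : E, 0 ≤ X ∧ ∀ k, u k ≤ (2 : ℝ) ^ k • X := by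
  have hsummable : Summable fun k => (2⁻¹ : ℝ) ^ k • u k :=
    .of_norm_bounded
      ((summable_geometric_of_lt_one (by norm_num : (0 : ℝ) ≤ 2⁻¹) (by norm_num)).mul_right M)
      fun k => by rw [norm_smul, norm_pow, norm_inv, Real.norm_two]; gcongr; exact hM k
  have hterm_nonneg (k : ℕ) : 0 ≤ (2⁻¹ : ℝ) ^ k • u k := smul_nonneg (by positivity) (hu k)
  refine ⟨∑' k, (2⁻¹ : ℝ) ^ k • u k, tsum_nonneg hterm_nonneg, fun k => ?_⟩
  calc u k = (2 : ℝ) ^ k • (2⁻¹ : ℝ) ^ k • u k := by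
        rw [smul_smul, ← mul_pow, mul_inv_cancel₀ two_ne_zero, one_pow, one_smul]
    _ ≤ (2 : ℝ) ^ k • ∑' k, (2⁻¹ : ℝ) ^ k • u k :=
        smul_le_smul_of_nonneg_left (hsummable.le_tsum k fun j _ => hterm_nonneg j)
          (by positivity)

lemma weakStarNull_of_le {g R : ℕ → E →L[ℝ] ℝ} (hg : ∀ n, PositiveFunctional (g n))
    (hgR : ∀ n x, 0 ≤ x → g n x ≤ R n x)
    (hR : ∀ v, 0 ≤ v → Tendsto (fun n => R n v) atTop (𝓝 0)) : WeakStarNull g := fun z =>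
  squeeze_zero_norm (fun n => ((hg n).abs_apply_le z).trans (hgR n _ (abs_nonneg z)))
    (hR |z| (abs_nonneg z))

lemma apply_sub_le_componentFun {P : E →L[ℝ] ℝ} (hP : PositiveFunctional P) (u : E) {v : E}
    (hv : 0 ≤ v) : P u - P v ≤ componentFun P (u - v)⁺ u := by
  rw [← map_sub]
  refine (hP.mono (le_inf (sub_le_self u hv) (le_posPart _))).trans ?_
  simpa using le_componentFun hP u 1

lemma PositiveFunctional.apply_disjointShift_lt {R : E →L[ℝ] ℝ} (hR : PositiveFunctional R)
    {u : ℕ → E} {X : E} (hX : 0 ≤ X) {j : ℕ} {δ η : ℝ}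
    (hsum : R (∑ i ∈ Finset.range (j + 1), u i) ≤ δ * 4⁻¹ ^ j) (hRX : R X < η) :
    R (disjointShift u X j) < δ + η := by
  simp only [disjointShift, map_add, map_smul, smul_eq_mul]
  refine add_lt_add_of_le_of_lt ?_ ?_
  · calc (4 : ℝ) ^ j * R (∑ i ∈ Finset.range (j + 1), u i) ≤ 4 ^ j * (δ * 4⁻¹ ^ j) := by gcongr
      _ = δ := by rw [mul_left_comm, ← mul_pow, mul_inv_cancel₀ four_ne_zero, one_pow, mul_one]
  · exact (mul_le_of_le_one_left (hR X hX) (pow_le_one₀ (by norm_num) (by norm_num))).trans_lt hRX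

end Sequences

section AlmostLimited

variable {E : Type*} [NormedAddCommGroup E] [Lattice E] [HasSolidNorm E] [IsOrderedAddMonoid E]
  [NormedSpace ℝ E] [CompleteSpace E] {A : Set E} {Q : ℕ → E →L[ℝ] ℝ} {a : ℕ → E}

lemma AlmostLimitedSet.exists_apply_lt (hA : AlmostLimitedSet A)
    (hQ_pos : ∀ n, PositiveFunctional (Q n))
    (hQ : ∀ v, 0 ≤ v → Tendsto (fun n => Q n v) atTop (𝓝 0)) (haA : ∀ k, a k ∈ A)
    (ha : ∀ k, 0 ≤ a k) {ε : ℝ} (hε : 0 < ε) : ∃ k, Q k (a k) < ε := by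
  by_contra! hlarge
  obtain ⟨φ, hφ, hφ_small⟩ := exists_strictMono_apply_sum_le hQ ha
    (δ := fun j => ε / 4 * 4⁻¹ ^ j) fun j => by positivity
  obtain ⟨M, hM⟩ := isBounded_iff_forall_norm_le.mp hA.1
  set u : ℕ → E := fun j => a (φ j)
  obtain ⟨X, hX, huX⟩ := exists_nonneg_forall_le_two_pow_smul (fun j => ha (φ j))
    (fun j => hM _ (haA (φ j)))
  set R : ℕ → E →L[ℝ] ℝ := fun j => Q (φ (j + 1))
  have hR (v : E) (hv : 0 ≤ v) : Tendsto (fun j => R j v) atTop (𝓝 0) :=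
    (hQ v hv).comp (hφ.comp (strictMono_id.add_const 1)).tendsto_atTop
  choose g hg using fun j => exists_clm_eq_componentFun (hQ_pos (φ (j + 1))) (posPart_nonneg
    (u (j + 1) - disjointShift u X j))
  have hg_pos (j : ℕ) : PositiveFunctional (g j) := fun x hx =>
    hg j x hx ▸ componentFun_nonneg (hQ_pos _) hx
  have hg_disj : DualDisjointSeq g := fun i j hij =>
    dualDisjoint_of_eq_componentFun (hQ_pos _) (hQ_pos _) (posPart_nonneg _) (posPart_nonneg _)
      (posPart_sub_disjointShift_inf_eq_zero (fun k => ha (φ k)) hX huX hij) (hg i) (hg j)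
  have hg_null : WeakStarNull g := weakStarNull_of_le hg_pos
    (fun j x hx => hg j x hx ▸ componentFun_le (hQ_pos _) x) hR
  have hg_small : ∀ᶠ j in atTop, g j (u (j + 1)) < ε / 2 := by
    filter_upwards [(Metric.tendstoUniformlyOn_iff.mp (hA.2 g hg_disj hg_null)) (ε / 2)
      (by positivity)] with j hj
    simpa using (le_abs_self _).trans_lt (by simpa using hj _ (haA (φ (j + 1))))
  have hg_large : ∀ᶠ j in atTop, ε / 2 < g j (u (j + 1)) := by
    filter_upwards [(hR X hX).eventually (gt_mem_nhds (by positivity : 0 < ε / 4))] with j hj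
    have hshift : R j (disjointShift u X j) < ε / 4 + ε / 4 :=
      (hQ_pos _).apply_disjointShift_lt hX (hφ_small j) hj
    have hlow := apply_sub_le_componentFun (hQ_pos (φ (j + 1))) (u (j + 1))
      (disjointShift_nonneg (fun k => ha (φ k)) hX j)
    rw [← hg j (u (j + 1)) (ha _)] at hlow
    linarith [hlarge (φ (j + 1))]
  obtain ⟨j, hj_small, hj_large⟩ := (hg_small.and hg_large).exists
  linarith

lemma AlmostLimitedSet.tendsto_apply_of_positive (hA : AlmostLimitedSet A)
    (hQ_pos : ∀ n, PositiveFunctional (Q n))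
    (hQ : ∀ v, 0 ≤ v → Tendsto (fun n => Q n v) atTop (𝓝 0)) (haA : ∀ k, a k ∈ A)
    (ha : ∀ k, 0 ≤ a k) : Tendsto (fun k => Q k (a k)) atTop (𝓝 0) := by
  refine tendsto_order.2 ⟨fun b hb => .of_forall fun k => hb.trans_le (hQ_pos k _ (ha k)),
    fun ε hε => ?_⟩
  by_contra hfreq
  obtain ⟨φ, hφ, hφ_large⟩ := extraction_of_frequently_atTop (not_eventually.mp hfreq)
  obtain ⟨k, hk⟩ := hA.exists_apply_lt (Q := Q ∘ φ) (a := a ∘ φ) (fun n => hQ_pos _)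
    (fun v hv => (hQ v hv).comp hφ.tendsto_atTop) (fun k => haA _) (fun k => ha _) hε
  exact hφ_large k hk

end AlmostLimited

/-- If the lattice operations of `E*` are weak* sequentially continuous,
then every almost limited solid subset of `E` is limited. -/
theorem statement7 {E : Type*} [NormedAddCommGroup E] [Lattice E] [HasSolidNorm E] [IsOrderedAddMonoid E] [NormedSpace ℝ E]
    [CompleteSpace E] (hE : DualLatticeWeakStarSeqCont E) :
    ∀ A : Set E, IsSolid A → AlmostLimitedSet A → LimitedSet A := by
  intro A hA_solid hA
  refine ⟨hA.1, fun f hf => tendstoUniformlyOn_zero_of_forall_tendsto fun x hxA => ?_⟩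
  choose P hP_pos hP using fun n => exists_clm_eq_absFunctional (f n)
  have hP_null (v : E) (hv : 0 ≤ v) : Tendsto (fun n => P n v) atTop (𝓝 0) :=
    (hE f hf v hv).congr fun n => (hP n v hv).symm
  refine squeeze_zero_norm (fun n => ?_) (hA.tendsto_apply_of_positive hP_pos hP_null
    (fun n => hA_solid _ (hxA n) _ (abs_abs _).le) fun n => abs_nonneg (x n))
  rw [Real.norm_eq_abs, hP n _ (abs_nonneg _)]
  exact abs_apply_le_absFunctional (f n) le_rfl
end
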